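/- arXiv:2207.12518 — 4 statements merged into one kernel-verified Lean document; each statement's English description precedes it below -/
import Mathlib

section
/- Let C be a free group and let A ≤ B ≤ C be subgroups with A a free factor of C. Then A is a free factor of B. -/
/-!
Choose bases of `A` and of a complement `P`; together they form a basis of `C` (Nielsen–Schreier
makes `A` and `P` free). Let `C` act on `C ⧸ B`. The action groupoid is free on the arrows
`xB ⟶ cxB` labelled by basis elements `c`, and its vertex group at `B` is `B`. A spanning tree of
the generating graph turns the arrows outside the tree into a basis of `B`. An arrow labelled by a
basis element of `A` is a loop at the vertex `B` (as `A ≤ B`), and a tree never contains an arrow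
into its root, so the basis elements of `A` belong to this basis of `B`. A subset of a basis
always generates a free factor.
-/

/-- A subgroup `A` of a group `G` is a *free factor* of `G` if there is a subgroup `P`
such that the canonical homomorphism `A ∗ P →* G` induced by the inclusions is bijective. -/
def IsFreeFactor {G : Type*} [Group G] (A : Subgroup G) : Prop :=
  ∃ P : Subgroup G, Function.Bijective (Monoid.Coprod.lift A.subtype P.subtype)

universe u

open Function Subgroup Monoid CategoryTheory CategoryTheory.ActionCategory Quiver
open scoped Monoid.Coprod

theorem Subgroup.closure_hom_ext {G M : Type*} [Group G] [Monoid M] {s : Set G}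
    {f g : closure s →* M}
    (h : ∀ x (hx : x ∈ s), f ⟨x, subset_closure hx⟩ = g ⟨x, subset_closure hx⟩) : f = g :=
  MonoidHom.eq_of_eqOn_dense closure_closure_coe_preimage fun x hx => h x hx

theorem Subgroup.subgroupOf_eq_closure_image_inclusion {C : Type*} [Group C] {A B : Subgroup C}
    (hAB : A ≤ B) {s : Set A} (hs : closure s = ⊤) :
    A.subgroupOf B = closure (inclusion hAB '' s) := by
  rw [← MonoidHom.map_closure, hs, ← MonoidHom.range_eq_map, inclusion_range]

theorem Quiver.isEmpty_hom_root {V : Type*} [Quiver V] [Arborescence V] (a : V) :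
    IsEmpty (a ⟶ root V) :=
  ⟨fun f => Path.cons_ne_nil default f (Subsingleton.elim _ _)⟩

def FreeGroup.coprodMulEquivSum (ι κ : Type*) : FreeGroup ι ∗ FreeGroup κ ≃* FreeGroup (ι ⊕ κ) :=
  (Coprod.lift (map Sum.inl) (map Sum.inr)).toMulEquiv
    (lift (Sum.elim (Coprod.inl ∘ of) (Coprod.inr ∘ of)))
    (by ext <;> simp) (by ext (_ | _) <;> simp)

namespace FreeGroupBasis

section

variable {ι κ G H : Type*} [Group G] [Group H]

protected def coprod (bG : FreeGroupBasis ι G) (bH : FreeGroupBasis κ H) :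
    FreeGroupBasis (ι ⊕ κ) (G ∗ H) :=
  ofRepr ((MulEquiv.coprodCongr bG.repr bH.repr).trans (FreeGroup.coprodMulEquivSum ι κ))

theorem closure_range (b : FreeGroupBasis ι G) : closure (Set.range b) = ⊤ := by
  rw [← FreeGroup.lift_surjective_iff_closure_range_eq_top]
  have : FreeGroup.lift b = (b.repr.symm : FreeGroup ι →* G) :=
    FreeGroup.ext_hom _ _ fun _ => FreeGroup.lift_apply_of
  exact this ▸ b.repr.symm.surjective

theorem isFreeFactor_closure_image (b : FreeGroupBasis ι G) (s : Set ι) :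
    IsFreeFactor (closure (b '' s)) := by
  classical
  set S := closure (b '' s)
  set T := closure (b '' sᶜ)
  refine ⟨T, ?_⟩
  let F : G →* S ∗ T := b.lift fun i =>
    if h : i ∈ s then Coprod.inl ⟨b i, subset_closure ⟨i, h, rfl⟩⟩
    else Coprod.inr ⟨b i, subset_closure ⟨i, h, rfl⟩⟩
  have hL : (Coprod.lift S.subtype T.subtype).comp F = MonoidHom.id G :=
    b.ext_hom _ _ fun i => by by_cases h : i ∈ s <;> simp [F, h]
  have hS : F.comp S.subtype = Coprod.inl := closure_hom_ext fun _ ⟨i, h, hi⟩ => by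
    subst hi
    simp [F, h]
  have hT : F.comp T.subtype = Coprod.inr := closure_hom_ext fun _ ⟨i, h, hi⟩ => by
    subst hi
    simpa [F] using dif_neg h
  have hR : F.comp (Coprod.lift S.subtype T.subtype) = MonoidHom.id _ := Coprod.hom_ext hS hT
  exact bijective_iff_has_inverse.mpr ⟨F, DFunLike.congr_fun hR, DFunLike.congr_fun hL⟩

end

variable {G ι : Type u} [Group G]

/-- The instance `IsFreeGroupoid.actionGroupoidIsFree` labels the generating arrows by the
arbitrary basis `IsFreeGroup.Generators G`; here they are labelled by a prescribed basis. -/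
@[reducible]
def actionGroupoidIsFree (b : FreeGroupBasis ι G) (X : Type u) [MulAction G X] :
    IsFreeGroupoid (ActionCategory G X) where
  quiverGenerators := ⟨fun x y => { i : ι // b i • x.back = y.back }⟩
  of := fun i => ⟨b i.val, i.property⟩
  unique_lift := by
    intro M _ f
    let F : G →* (X → M) ⋊[mulAutArrow] G := b.lift fun i =>
      ⟨fun x => @f ⟨(), _⟩ ⟨(), x⟩ ⟨i, smul_inv_smul _ x⟩, b i⟩
    have hF : ∀ i, F (b i) = ⟨fun x => @f ⟨(), _⟩ ⟨(), x⟩ ⟨i, smul_inv_smul _ x⟩, b i⟩ := by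
      simp [F]
    clear_value F
    have hF_right : SemidirectProduct.rightHom.comp F = MonoidHom.id _ :=
      b.ext_hom _ _ fun i => by rw [MonoidHom.comp_apply, hF]; rfl
    refine ⟨uncurry F (DFunLike.ext_iff.mp hF_right), ?_, fun E hE => ?_⟩
    · rintro ⟨⟨⟩, x : X⟩ ⟨⟨⟩, y⟩ ⟨i, h : b i • x = y⟩
      change (F (b _)).left _ = _
      rw [hF]
      cases inv_smul_eq_iff.mpr h.symm
      rfl
    · have hE_curry : curry E = F := by
        refine b.ext_hom _ _ fun i => ?_
        rw [hF]
        ext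
        · convert! hE _ _ _
          rfl
        · rfl
      subst hE_curry
      refine Functor.hext (fun _ => Unit.ext _ _) (ActionCategory.cases ?_)
      intros
      rfl

end FreeGroupBasis

namespace IsFreeGroupoid

variable {G : Type u} [Groupoid.{u} G] [IsFreeGroupoid G]

namespace SpanningTree

variable (T : WideSubquiver (Symmetrify <| Generators G)) [Arborescence T]

noncomputable def rootVertex : G :=
  show T from root T

theorem loopOfHom_eq_self (x : End (rootVertex T)) : loopOfHom T x = x := by
  change treeHom T (rootVertex T) ≫ x ≫ inv (treeHom T (rootVertex T)) = x
  rw [show treeHom T (rootVertex T) = 𝟙 _ from treeHom_root T]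
  erw [Category.id_comp, IsIso.inv_id, Category.comp_id]

section

variable {T} {X : Type u} [Group X] {F : G ⥤ CategoryTheory.SingleObj X}
  (hF : ∀ a b (e : a ⟶ b), e ∈ wideSubquiverSymmetrify T a b → F.map (of e) = 1)
include hF

theorem map_homOfPath_eq_one {a : T} (p : Path (root T) a) : F.map (homOfPath T p) = 1 := by
  induction p with
  | nil => exact F.map_id _
  | cons p e ih =>
    erw [homOfPath.eq_2, F.map_comp, SingleObj.comp_as_mul, ih, mul_one]
    rcases e with ⟨e | e, eT⟩
    · exact hF _ _ e (Or.inl eT)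
    · erw [F.map_inv, SingleObj.inv_as_inv, inv_eq_one]
      exact hF _ _ e (Or.inr eT)

theorem map_loopOfHom {x y : G} (q : x ⟶ y) : F.map (loopOfHom T q) = F.map q := by
  simp only [treeHom, SingleObj.comp_as_mul, SingleObj.inv_as_inv, loopOfHom,
    Functor.map_inv, Functor.map_comp]
  rw [map_homOfPath_eq_one hF (a := show T from x), map_homOfPath_eq_one hF (a := show T from y)]
  group

end

open scoped Classical in
/-- `IsFreeGroupoid.SpanningTree.endIsFree` only records that this vertex group is free. -/
noncomputable def endBasis :
    FreeGroupBasis ((wideSubquiverEquivSetTotal <| wideSubquiverSymmetrify T)ᶜ : Set _)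
      (End (rootVertex T)) := by
  refine FreeGroupBasis.ofUniqueLift _ (fun e => loopOfHom T (of e.val.hom)) fun {X} _ f => ?_
  let f' : Labelling (Generators G) X := fun a b e =>
    if h : e ∈ wideSubquiverSymmetrify T a b then 1 else f ⟨⟨a, b, e⟩, h⟩
  obtain ⟨F, hF, hF_unique⟩ := unique_lift f'
  have hF_tree : ∀ a b (e : a ⟶ b), e ∈ wideSubquiverSymmetrify T a b → F.map (of e) = 1 :=
    fun a b e h => (hF a b e).trans (dif_pos h)
  refine ⟨F.mapEnd _, fun ⟨⟨a, b, e⟩, h⟩ => ?_, fun E hE => ?_⟩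
  · erw [Functor.mapEnd_apply, map_loopOfHom hF_tree, hF]
    exact dif_neg h
  · have hE_functor : functorOfMonoidHom T E = F := by
      refine hF_unique _ fun a b e => ?_
      change E (loopOfHom T _) = dite _ _ _
      split_ifs with h
      · rw [loopOfHom_eq_id T e h]
        exact E.map_one
      · exact hE ⟨⟨a, b, e⟩, h⟩
    ext x
    calc E x = (functorOfMonoidHom T E).map x := (congrArg E (loopOfHom_eq_self T x)).symm
      _ = F.map x := by rw [hE_functor]

theorem endBasis_apply (e) : endBasis T e = loopOfHom T (of e.val.hom) :=
  FreeGroup.lift_apply_of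

theorem exists_endBasis_eq_of
    (e : @Quiver.Hom (Generators G) _ (rootVertex (G := G) T) (rootVertex (G := G) T)) :
    ∃ k, endBasis T k = of e := by
  have he : e ∉ wideSubquiverSymmetrify T _ _ := by
    rintro (h | h) <;> exact (isEmpty_hom_root (V := T) (root T)).false ⟨_, h⟩
  exact ⟨⟨⟨_, _, e⟩, he⟩, by rw [endBasis_apply, loopOfHom_eq_self]⟩

end SpanningTree

theorem exists_basis_end_with_loops [IsConnected G] (r : G) :
    ∃ (κ : Type u) (b : FreeGroupBasis κ (End r)),
      ∀ e : @Quiver.Hom (Generators G) _ r r, of e ∈ Set.range b := by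
  let _ : RootedConnected (show Symmetrify (Generators G) from r) := generators_connected G r
  exact ⟨_, SpanningTree.endBasis (geodesicSubtree _),
    SpanningTree.exists_endBasis_eq_of (geodesicSubtree _)⟩

end IsFreeGroupoid

theorem FreeGroupBasis.exists_subgroup_basis_containing {C ι : Type u} [Group C]
    (b : FreeGroupBasis ι C) (B : Subgroup C) :
    ∃ (κ : Type u) (bB : FreeGroupBasis κ B), ∀ i (h : b i ∈ B), ⟨b i, h⟩ ∈ Set.range bB := by
  let _ := b.actionGroupoidIsFree (C ⧸ B)
  -- instance search does not identify the groupoid's category structure with `ActionCategory`'s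
  obtain ⟨κ, bEnd, hbEnd⟩ := @IsFreeGroupoid.exists_basis_end_with_loops _ _ _
    ActionCategory.instIsConnectedOfIsPretransitiveOfNonempty (objEquiv C (C ⧸ B) ↑(1 : C))
  refine ⟨κ, bEnd.map (endMulEquivSubgroup B), fun i h => ?_⟩
  have hi : b i • ((1 : C) : C ⧸ B) = (1 : C) := by
    rw [MulAction.Quotient.smul_coe, smul_eq_mul, mul_one, QuotientGroup.eq]
    simpa using h
  obtain ⟨k, hk⟩ := hbEnd ⟨i, hi⟩
  exact ⟨k, by erw [map_apply, hk]; rfl⟩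

/-- If `A ≤ B ≤ C` are subgroups of a free group `C` and `A` is a free factor of `C`,
then `A` is a free factor of `B`. -/
theorem isFreeFactor_subgroupOf_of_le {C : Type*} [Group C] [IsFreeGroup C]
    (A B : Subgroup C) (hAB : A ≤ B) (hA : IsFreeFactor A) :
    IsFreeFactor (A.subgroupOf B) := by
  obtain ⟨P, hAP⟩ := hA
  obtain ⟨ιA, ⟨bA⟩⟩ := IsFreeGroup.nonempty_basis (G := A)
  obtain ⟨ιP, ⟨bP⟩⟩ := IsFreeGroup.nonempty_basis (G := P)
  let b := (bA.coprod bP).map (MulEquiv.ofBijective _ hAP)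
  obtain ⟨κ, bB, hbB⟩ := b.exists_subgroup_basis_containing B
  have hA_sub : inclusion hAB '' Set.range bA ⊆ Set.range bB := by
    rintro _ ⟨_, ⟨i, rfl⟩, rfl⟩
    exact hbB (.inl i) (hAB (bA i).2)
  rw [subgroupOf_eq_closure_image_inclusion hAB bA.closure_range,
    ← Set.image_preimage_eq_of_subset hA_sub]
  exact bB.isFreeFactor_closure_image _
end

section
/- For any automorphism φ of F∞ and any n ∈ ℕ, there exist an automorphism ψ of F∞ and an integer m ≥ n such that ψ agrees with φ on the subgroup A_n generated by {a_1, …, a_n}, and ψ restricts to the identity on the subgroup B_m generated by {a_i : i > m}. -/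
/-- `A n` is the subgroup of `F∞` generated by the first `n` standard basis elements. -/
def A (n : ℕ) : Subgroup (FreeGroup ℕ) :=
  Subgroup.closure (FreeGroup.of '' {i : ℕ | i < n})

/-- `B m` is the subgroup of `F∞` generated by all the other standard basis elements. -/
def B (m : ℕ) : Subgroup (FreeGroup ℕ) :=
  Subgroup.closure (FreeGroup.of '' {i : ℕ | m ≤ i})

noncomputable section
open CategoryTheory CategoryTheory.ActionCategory CategoryTheory.SingleObj Quiver FreeGroup
open scoped Classical

namespace MarkedNS

/-- Unique lift property for the concrete free group `FreeGroup α`. -/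
theorem freeGroup_unique_lift {α : Type*} {X : Type*} [Group X] (f : α → X) :
    ∃! F : FreeGroup α →* X, ∀ a, F (FreeGroup.of a) = f a :=
  ⟨FreeGroup.lift f, fun a => FreeGroup.lift_apply_of, fun F' hF' =>
    FreeGroup.ext_hom _ _ fun a => (hF' a).trans (FreeGroup.lift_apply_of).symm⟩

variable (H : Subgroup (FreeGroup ℕ))

local notation "F∞" => FreeGroup ℕ

/-- The action groupoid. -/
abbrev C := ActionCategory F∞ (F∞ ⧸ H)

/-- Type synonym for vertices of the concrete generating quiver. -/
def Gen := C H

/-- Vertex of `Gen` from vertex of the action category. -/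
@[reducible] def toGen (x : C H) : Gen H := x

/-- Vertex of the action category from vertex of `Gen`. -/
@[reducible] def ofGen (x : Gen H) : C H := x

instance : Quiver (Gen H) :=
  ⟨fun a b => { e : ℕ // FreeGroup.of e • (ofGen H a).back = (ofGen H b).back }⟩

instance instIsIsoC {a b : C H} (f : a ⟶ b) : IsIso f := IsIso.of_groupoid f

instance instGroupEndC (x : C H) : Group (End x) := End.group x

variable {H}

/-- The morphism of the action category attached to a generating edge. -/
def ofE : ∀ {a b : Gen H}, (a ⟶ b) → (ofGen H a ⟶ ofGen H b) := fun e =>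
  ⟨FreeGroup.of e.1, e.2⟩

variable (H)

theorem unique_lift_C {X : Type} [Group X] (f : Labelling (Gen H) X) :
    ∃! F : C H ⥤ CategoryTheory.SingleObj X, ∀ (a b) (g : a ⟶ b), F.map (ofE g) = f g := by
  let f' : ℕ → ((F∞ ⧸ H) → X) ⋊[mulAutArrow] F∞ := fun e =>
    ⟨fun b => @f ⟨(), _⟩ ⟨(), b⟩ ⟨e, smul_inv_smul _ b⟩, FreeGroup.of e⟩
  rcases freeGroup_unique_lift f' with ⟨F', hF', uF'⟩
  refine ⟨uncurry F' ?_, ?_, ?_⟩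
  · suffices SemidirectProduct.rightHom.comp F' = MonoidHom.id _ by
      exact DFunLike.ext_iff.mp this
    apply FreeGroup.ext_hom; intro x
    rw [MonoidHom.comp_apply, hF']
    rfl
  · rintro ⟨⟨⟩, a : F∞ ⧸ H⟩ ⟨⟨⟩, b⟩ ⟨e, h : FreeGroup.of e • a = b⟩
    change (F' (FreeGroup.of _)).left _ = _
    rw [hF']
    cases inv_smul_eq_iff.mpr h.symm
    rfl
  · intro E hE
    have : curry E = F' := by
      apply uF'
      intro e
      ext
      · convert! hE _ _ _
        rfl
      · rfl
    apply Functor.hext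
    · intro
      apply Unit.ext
    · refine ActionCategory.cases ?_
      intros
      subst this
      rfl

theorem ext_functor_C {X : Type} [Group X] (f g : C H ⥤ CategoryTheory.SingleObj X)
    (h : ∀ (a b) (e : a ⟶ b), f.map (ofE (a := a) (b := b) e) = g.map (ofE e)) : f = g :=
  let ⟨_, _, u⟩ := unique_lift_C H fun (a b : Gen H) (e : a ⟶ b) => (show X from g.map (ofE e))
  (u _ h).trans (u _ fun _ _ _ => rfl).symm


section SpanningTree

variable {H} (T : WideSubquiver (Symmetrify (Gen H)))
  [Arborescence (WideSubquiver.toType (Symmetrify (Gen H)) T)]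

/-- The root as an object of the action category. -/
def root' : C H :=
  ofGen H (show Gen H from root (WideSubquiver.toType (Symmetrify (Gen H)) T))

/-- A path in the tree gives a hom, by composition. -/
def homOfPath :
    ∀ {a : Gen H}, Path (root (WideSubquiver.toType (Symmetrify (Gen H)) T)) a →
      (root' T ⟶ ofGen H a)
  | _, Path.nil => 𝟙 _
  | _, Path.cons p f => homOfPath p ≫ Sum.recOn f.val (fun e => ofE e) fun e => inv (ofE e)

/-- For every vertex `a`, there is a canonical hom from the root. -/
def treeHom (a : C H) : root' T ⟶ a :=
  homOfPath T (Arborescence.uniquePath (V := WideSubquiver.toType (Symmetrify (Gen H)) T) a).default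

theorem treeHom_eq {a : C H} (p : Path (root (WideSubquiver.toType (Symmetrify (Gen H)) T))
    (toGen H a)) : treeHom T a = homOfPath T p := by
  unfold treeHom
  rw [← (Arborescence.uniquePath (V := WideSubquiver.toType (Symmetrify (Gen H)) T) _).uniq p]

@[simp]
theorem treeHom_root : treeHom T (root' T) = 𝟙 _ :=
  _root_.trans (treeHom_eq T Path.nil) rfl

/-- Any hom in `C H` can be made into a loop, by conjugating with `treeHom`s. -/
def loopOfHom {a b : C H} (p : a ⟶ b) : End (root' T) :=
  treeHom T a ≫ p ≫ inv (treeHom T b)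

/-- Turning an edge in the spanning tree into a loop gives the identity loop. -/
theorem loopOfHom_eq_id {a b : Gen H} (e : a ⟶ b) (He : e ∈ wideSubquiverSymmetrify T a b) :
    loopOfHom T (ofE e) = 𝟙 (root' T) := by
  rw [loopOfHom, ← Category.assoc, IsIso.comp_inv_eq, Category.id_comp]
  cases' He with He He
  · erw [treeHom_eq T (Path.cons (Arborescence.uniquePath (V := WideSubquiver.toType (Symmetrify (Gen H)) T) _).default ⟨Sum.inl e, He⟩), homOfPath]
    rfl
  · erw [treeHom_eq T (Path.cons (Arborescence.uniquePath (V := WideSubquiver.toType (Symmetrify (Gen H)) T) _).default ⟨Sum.inr e, He⟩), homOfPath]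
    simp only [IsIso.inv_hom_id, Category.comp_id, Category.assoc, treeHom]

/-- Since a hom gives a loop, any homomorphism from the vertex group at the root
    extends to a functor on the whole groupoid. -/
@[simps]
def functorOfMonoidHom {X} [Monoid X] (f : End (root' T) →* X) :
    C H ⥤ CategoryTheory.SingleObj X where
  obj _ := ()
  map p := f (loopOfHom T p)
  map_id := by
    intro a
    dsimp only [loopOfHom]
    rw [Category.id_comp, IsIso.hom_inv_id, ← End.one_def, f.map_one, id_as_one]
  map_comp := by
    intros
    rw [comp_as_mul, ← f.map_mul]
    simp only [IsIso.inv_hom_id_assoc, loopOfHom, End.mul_def, Category.assoc]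

/-- The vertex group at the root is freely generated by loops coming from generating
arrows in the complement of the tree. -/
theorem endBasis_unique_lift :
    ∀ {X : Type} [Group X]
      (f : ((wideSubquiverEquivSetTotal <| wideSubquiverSymmetrify T)ᶜ : Set _) → X),
      ∃! F : End (root' T) →* X,
        ∀ a, F (loopOfHom T (ofE a.val.hom)) = f a :=
  (by
      intro X _ f
      let f' : Labelling (Gen H) X := fun a b e =>
        if h : e ∈ wideSubquiverSymmetrify T a b then 1 else f ⟨⟨a, b, e⟩, h⟩
      rcases unique_lift_C H f' with ⟨F', hF', uF'⟩
      refine ⟨F'.mapEnd _, ?_, ?_⟩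
      · suffices ∀ {x y} (q : x ⟶ y), F'.map (loopOfHom T q) = (F'.map q : X) by
          rintro ⟨⟨a, b, e⟩, h⟩
          erw [Functor.mapEnd_apply, this, hF']
          exact dif_neg h
        intros x y q
        suffices ∀ {a} (p : Path (root (WideSubquiver.toType (Symmetrify (Gen H)) T)) a),
            F'.map (homOfPath T p) = 1 by
          simp only [this, treeHom, comp_as_mul, inv_as_inv, loopOfHom, inv_one, mul_one,
            one_mul, Functor.map_inv, Functor.map_comp]
          erw [this (a := x), this (a := y)]
          show (1 : X)⁻¹ * F'.map q * 1 = F'.map q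
          rw [inv_one, one_mul, mul_one]
        intro a p
        induction' p with b c p e ih
        · rw [homOfPath]
          exact F'.map_id _
        erw [homOfPath]
        rw [F'.map_comp, comp_as_mul, ih, mul_one]
        rcases e with ⟨e | e, eT⟩
        · erw [hF']
          exact dif_pos (Or.inl eT)
        · rw [F'.map_inv, inv_as_inv, inv_eq_one]
          erw [hF']
          exact dif_pos (Or.inr eT)
      · intro E hE
        ext x
        suffices (functorOfMonoidHom T E).map x = F'.map x by
          simpa only [loopOfHom, functorOfMonoidHom, IsIso.inv_id, treeHom_root,
            Category.id_comp, Category.comp_id] using! this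
        congr
        apply uF'
        intro a b e
        change E (loopOfHom T _) = dite _ _ _
        split_ifs with h
        · rw [loopOfHom_eq_id T e h, ← End.one_def, E.map_one]
        · exact hE ⟨⟨a, b, e⟩, h⟩)

theorem ofUniqueLift_apply {G : Type} [Group G] (X : Type) (of : X → G)
    (h : ∀ {H : Type} [Group H] (f : X → H), ∃! F : G →* H, ∀ a, F (of a) = f a) (a : X) :
    FreeGroupBasis.ofUniqueLift X of h a = of a := by
  show (FreeGroupBasis.ofUniqueLift X of h).repr.symm (FreeGroup.of a) = of a
  rw [FreeGroupBasis.ofUniqueLift, FreeGroupBasis.ofLift]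
  simp

/-- The free group basis of the vertex group at the root. -/
def endBasis :
    FreeGroupBasis ((wideSubquiverEquivSetTotal <| wideSubquiverSymmetrify T)ᶜ : Set _)
      (End (root' T)) :=
  FreeGroupBasis.ofUniqueLift _ (fun e => loopOfHom T (ofE e.val.hom))
    (endBasis_unique_lift T)

theorem endBasis_apply (e) : endBasis T e = loopOfHom T (ofE e.val.hom) :=
  ofUniqueLift_apply _ _ (endBasis_unique_lift T) e

end SpanningTree

/-- Vertex of the symmetrified generating quiver from a vertex of the action category. -/
@[reducible] def toSGen (x : C H) : Symmetrify (Gen H) := x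

theorem path_nonempty_of_hom {a b : C H} :
    Nonempty (a ⟶ b) → Nonempty (Path (toSGen H a) (toSGen H b)) := by
  rintro ⟨p⟩
  rw [← @WeaklyConnectedComponent.eq (Gen H) _ (toGen H a) (toGen H b), eq_comm, ← FreeGroup.of_injective.eq_iff, ←
    mul_inv_eq_one]
  let X := FreeGroup (WeaklyConnectedComponent <| Gen H)
  let f : C H → X := fun g => FreeGroup.of (WeaklyConnectedComponent.mk (toGen H g))
  let F : C H ⥤ CategoryTheory.SingleObj X := SingleObj.differenceFunctor f
  change F.map p = ((@CategoryTheory.Functor.const (C H) _ _ (SingleObj.category X)).obj ()).map p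
  have : F = (@CategoryTheory.Functor.const (C H) _ _ (SingleObj.category X)).obj () := by
    apply ext_functor_C
    intro c d e
    show f (ofGen H d) * (f (ofGen H c))⁻¹ = (1 : X)
    rw [mul_inv_eq_one]
    apply congr_arg FreeGroup.of
    apply (WeaklyConnectedComponent.eq _ _).mpr
    exact ⟨Hom.toPath (Sum.inr e)⟩
  rw [this]

theorem rootedConnected_C (r : C H) : RootedConnected (toSGen H r) :=
  ⟨fun b => path_nonempty_of_hom H (@CategoryTheory.nonempty_hom_of_preconnected_groupoid _ _
    (inferInstance : IsConnected (C H)).toIsPreconnected r b)⟩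

/-- Marked Nielsen-Schreier: a subgroup of `FreeGroup ℕ` has a free group basis containing
all the standard generators that belong to the subgroup. -/
theorem subgroup_marked_basis :
    ∃ (S : Type) (b : FreeGroupBasis S ↥H),
      ∀ (i : ℕ) (_ : FreeGroup.of i ∈ H), ∃ s : S, ((b s : ↥H) : F∞) = FreeGroup.of i := by
  let r : C H := objEquiv F∞ (F∞ ⧸ H) ↑(1 : F∞)
  haveI : RootedConnected (toSGen H r) := rootedConnected_C H r
  let T : WideSubquiver (Symmetrify (Gen H)) := geodesicSubtree (toSGen H r)
  letI hArb : Arborescence (WideSubquiver.toType (Symmetrify (Gen H)) T) :=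
    geodesicArborescence (toSGen H r)
  let μ : End (root' T) ≃* ↥H := endMulEquivSubgroup H
  refine ⟨_, (endBasis T).map μ, ?_⟩
  intro i h
  have hsmul : FreeGroup.of i • (ofGen H (toGen H (root' T))).back
      = (ofGen H (toGen H (root' T))).back := by
    show FreeGroup.of i • ((1 : F∞) : F∞ ⧸ H) = ((1 : F∞) : F∞ ⧸ H)
    rw [MulAction.Quotient.smul_mk, smul_eq_mul, mul_one]
    exact (QuotientGroup.eq).mpr (by simpa using inv_mem h)
  let ε : toGen H (root' T) ⟶ toGen H (root' T) := ⟨i, hsmul⟩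
  have hcompl : (⟨toGen H (root' T), toGen H (root' T), ε⟩ : Total (Gen H)) ∈
      ((wideSubquiverEquivSetTotal <| wideSubquiverSymmetrify T)ᶜ : Set _) := by
    intro hmem
    have hmem' : ε ∈ wideSubquiverSymmetrify T (toGen H (root' T)) (toGen H (root' T)) := hmem
    have : ∀ (q : Quiver.Hom (V := WideSubquiver.toType (Symmetrify (Gen H)) T)
        (root (WideSubquiver.toType (Symmetrify (Gen H)) T))
        (root (WideSubquiver.toType (Symmetrify (Gen H)) T))), False := by
      intro q
      have h1 : (Quiver.Path.nil.cons q) = (Quiver.Path.nil :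
          Quiver.Path (root (WideSubquiver.toType (Symmetrify (Gen H)) T)) _) :=
        (Unique.eq_default _).trans (Unique.eq_default _).symm
      simpa using congrArg Quiver.Path.length h1
    cases hmem' with
    | inl h1 => exact this ⟨Sum.inl ε, h1⟩
    | inr h1 => exact this ⟨Sum.inr ε, h1⟩
  refine ⟨⟨_, hcompl⟩, ?_⟩
  have h2 : (((endBasis T).map μ) ⟨_, hcompl⟩ : ↥H) = μ (loopOfHom T (ofE ε)) := by
    erw [FreeGroupBasis.map_apply, endBasis_apply]
    rfl
  have hloop : loopOfHom T (show root' T ⟶ root' T from ofE ε)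
      = (show End (root' T) from ofE ε) := by
    simp only [loopOfHom, treeHom_root, IsIso.inv_id, Category.id_comp, Category.comp_id]
  have h3 : μ (loopOfHom T (ofE ε)) = μ (show End (root' T) from ofE ε) := congrArg μ hloop
  rw [h2]
  rw [h3]
  rfl

end MarkedNS

namespace Approx

open FreeGroup

local notation "F∞" => FreeGroup ℕ

theorem A_mono {m m' : ℕ} (h : m ≤ m') : A m ≤ A m' :=
  Subgroup.closure_mono (Set.image_mono fun _ hi => lt_of_lt_of_le hi h)

theorem of_mem_A {i m : ℕ} (h : i < m) : FreeGroup.of i ∈ A m :=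
  Subgroup.subset_closure ⟨i, h, rfl⟩

theorem exists_mem_A (x : F∞) : ∃ m, x ∈ A m := by
  induction x using FreeGroup.induction_on with
  | C1 => exact ⟨0, one_mem _⟩
  | of i => exact ⟨i + 1, of_mem_A (Nat.lt_succ_self i)⟩
  | inv_of i _ => exact ⟨i + 1, inv_mem (of_mem_A (Nat.lt_succ_self i))⟩
  | mul x y ihx ihy =>
      obtain ⟨mx, hx⟩ := ihx
      obtain ⟨my, hy⟩ := ihy
      exact ⟨max mx my, mul_mem (A_mono (le_max_left _ _) hx) (A_mono (le_max_right _ _) hy)⟩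

theorem exists_bound (φ : MulAut F∞) (n : ℕ) :
    ∃ m, n ≤ m ∧ 0 < m ∧ ∀ i < n, φ (FreeGroup.of i) ∈ A m := by
  choose f hf using fun i : ℕ => exists_mem_A (φ (FreeGroup.of i))
  refine ⟨max (n + 1) ((Finset.range n).sup f), by omega, by omega, fun i hi => ?_⟩
  exact A_mono (le_trans (Finset.le_sup (Finset.mem_range.mpr hi)) (le_max_right _ _)) (hf i)

/-- The embedding of `FreeGroup (Fin m)` in `F∞`. -/
def vmap (m : ℕ) : FreeGroup (Fin m) →* F∞ := FreeGroup.map Fin.val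

theorem vmap_injective {m : ℕ} (hm : 0 < m) : Function.Injective (vmap m) := by
  intro x y hxy
  have h := congrArg (FreeGroup.map (fun i : ℕ => if h : i < m then (⟨i, h⟩ : Fin m)
    else ⟨0, hm⟩)) hxy
  simpa [vmap, FreeGroup.map.comp, Function.comp_def, FreeGroup.map.id] using h

theorem vmap_range (m : ℕ) : (vmap m).range = A m := by
  have h1 : ∀ x, vmap m x = FreeGroup.lift (fun i : Fin m => FreeGroup.of (i : ℕ)) x := by
    intro x
    rw [vmap, FreeGroup.map_eq_lift]
    rfl
  have h2 : vmap m = FreeGroup.lift (fun i : Fin m => FreeGroup.of (i : ℕ)) :=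
    MonoidHom.ext h1
  rw [h2, FreeGroup.range_lift_eq_closure]
  unfold A
  congr 1
  ext x
  constructor
  · rintro ⟨i, rfl⟩
    exact ⟨(i : ℕ), i.2, rfl⟩
  · rintro ⟨j, hj, rfl⟩
    exact ⟨⟨j, hj⟩, rfl⟩

/-- `A m` is free on `Fin m`. -/
def basisAm (m : ℕ) (hm : 0 < m) : FreeGroup (Fin m) ≃* ↥(A m) :=
  (MonoidHom.ofInjective (vmap_injective hm)).trans (MulEquiv.subgroupCongr (vmap_range m))

theorem basisAm_apply (m : ℕ) (hm : 0 < m) (x : FreeGroup (Fin m)) :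
    ((basisAm m hm x : ↥(A m)) : F∞) = vmap m x := by
  have : ((MonoidHom.ofInjective (vmap_injective hm) x : (vmap m).range) : F∞) = vmap m x :=
    MonoidHom.ofInjective_apply _
  exact this

/-- Two free groups over types `S`, `Fin m` that are isomorphic as groups have
equipotent bases. -/
theorem rank_eq {S : Type} {m : ℕ} (e : FreeGroup S ≃* FreeGroup (Fin m)) :
    Nonempty (S ≃ Fin m) := by
  classical
  set X := Multiplicative (ZMod 2) with hX
  have E : (S → X) ≃ (Fin m → X) := by
    refine FreeGroup.lift.trans (Equiv.trans ?_ FreeGroup.lift.symm)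
    exact { toFun := fun f => f.comp e.symm.toMonoidHom
            invFun := fun f => f.comp e.toMonoidHom
            left_inv := fun f => by ext x; simp
            right_inv := fun f => by ext x; simp }
  haveI : Finite (S → X) := Finite.of_equiv _ E.symm
  haveI : Finite S := by
    have hinj : Function.Injective (fun s : S => (fun t : S =>
        if t = s then Multiplicative.ofAdd (1 : ZMod 2) else 1 : S → X)) := by
      intro s s' hss'
      by_contra hne
      have h1 := congrFun hss' s
      simp only [if_pos rfl, if_neg (fun h : s = s' => hne h)] at h1
      exact (by decide : Multiplicative.ofAdd (1 : ZMod 2) ≠ 1) h1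
    exact Finite.of_injective _ hinj
  haveI : Fintype S := Fintype.ofFinite S
  have hcard : Fintype.card S = m := by
    have h1 : Fintype.card (S → X) = Fintype.card (Fin m → X) := Fintype.card_congr E
    have hX2 : Fintype.card X = 2 := by
      simp [hX]
    rw [Fintype.card_fun, Fintype.card_fun, hX2, Fintype.card_fin] at h1
    exact Nat.pow_right_injective (le_refl 2) h1
  exact ⟨Fintype.equivFinOfCardEq hcard⟩

theorem marked_equiv {S : Type} [Fintype S] {n m : ℕ} (hcard : Fintype.card S = m)
    (hnm : n ≤ m) (σ : Fin n → S) (hσ : Function.Injective σ) :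
    ∃ τ : (Fin n ⊕ Fin (m - n)) ≃ S, ∀ i : Fin n, τ (Sum.inl i) = σ i := by
  classical
  let p : S → Prop := fun s => s ∈ Set.range σ
  let e1 : Fin n ≃ {s // p s} := Equiv.ofInjective σ hσ
  have hc : Fintype.card {s // ¬ p s} = m - n := by
    rw [Fintype.card_subtype_compl, hcard]
    congr 1
    rw [← Fintype.card_congr e1, Fintype.card_fin]
  let e2 : {s // ¬ p s} ≃ Fin (m - n) := Fintype.equivFinOfCardEq hc
  refine ⟨(Equiv.sumCongr e1 e2.symm).trans (Equiv.sumCompl p), fun i => ?_⟩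
  simp only [Equiv.trans_apply, Equiv.sumCongr_apply, Sum.map_inl, Equiv.sumCompl_apply_inl]
  rfl

/-- Congruence of free group coproducts in the left factor. -/
def fgSumCongrLeft {α β γ : Type} (w : FreeGroup α ≃* FreeGroup β) :
    FreeGroup (α ⊕ γ) ≃* FreeGroup (β ⊕ γ) := by
  refine MonoidHom.toMulEquiv
    (FreeGroup.lift (Sum.elim
      (fun a => (FreeGroup.map Sum.inl : FreeGroup β →* FreeGroup (β ⊕ γ)) (w (FreeGroup.of a)))
      (fun c => FreeGroup.of (Sum.inr c))))
    (FreeGroup.lift (Sum.elim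
      (fun b => (FreeGroup.map Sum.inl : FreeGroup α →* FreeGroup (α ⊕ γ)) (w.symm (FreeGroup.of b)))
      (fun c => FreeGroup.of (Sum.inr c))))
    ?_ ?_
  · apply FreeGroup.ext_hom
    rintro (a | c)
    · have haux : (FreeGroup.lift (Sum.elim
          (fun b => (FreeGroup.map Sum.inl : FreeGroup α →* FreeGroup (α ⊕ γ)) (w.symm (FreeGroup.of b)))
          (fun c => FreeGroup.of (Sum.inr c)))).comp
            (FreeGroup.map (Sum.inl : β → β ⊕ γ))
          = (FreeGroup.map (Sum.inl : α → α ⊕ γ)).comp w.symm.toMonoidHom := by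
        apply FreeGroup.ext_hom
        intro b
        simp
      have h2 := DFunLike.congr_fun haux (w (FreeGroup.of a))
      simp only [MonoidHom.coe_comp, Function.comp_apply] at h2
      simp only [MonoidHom.coe_comp, Function.comp_apply, MonoidHom.id_apply,
        FreeGroup.lift_apply_of, Sum.elim_inl, h2]
      simp
    · simp
  · apply FreeGroup.ext_hom
    rintro (b | c)
    · have haux : (FreeGroup.lift (Sum.elim
          (fun a => (FreeGroup.map Sum.inl : FreeGroup β →* FreeGroup (β ⊕ γ)) (w (FreeGroup.of a)))
          (fun c => FreeGroup.of (Sum.inr c)))).comp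
            (FreeGroup.map (Sum.inl : α → α ⊕ γ))
          = (FreeGroup.map (Sum.inl : β → β ⊕ γ)).comp w.toMonoidHom := by
        apply FreeGroup.ext_hom
        intro a
        simp
      have h2 := DFunLike.congr_fun haux (w.symm (FreeGroup.of b))
      simp only [MonoidHom.coe_comp, Function.comp_apply] at h2
      simp only [MonoidHom.coe_comp, Function.comp_apply, MonoidHom.id_apply,
        FreeGroup.lift_apply_of, Sum.elim_inl, h2]
      simp
    · simp

theorem fgSumCongrLeft_apply_inl {α β γ : Type} (w : FreeGroup α ≃* FreeGroup β) (a : α) :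
    fgSumCongrLeft (γ := γ) w (FreeGroup.of (Sum.inl a))
      = FreeGroup.map Sum.inl (w (FreeGroup.of a)) := by
  simp [fgSumCongrLeft]

theorem fgSumCongrLeft_apply_inr {α β γ : Type} (w : FreeGroup α ≃* FreeGroup β) (c : γ) :
    fgSumCongrLeft w (FreeGroup.of (Sum.inr c)) = FreeGroup.of (Sum.inr c) := by
  simp [fgSumCongrLeft]

theorem fgSumCongrLeft_symm_apply_inl {α β γ : Type} (w : FreeGroup α ≃* FreeGroup β) (b : β) :
    (fgSumCongrLeft (γ := γ) w).symm (FreeGroup.of (Sum.inl b))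
      = FreeGroup.map Sum.inl (w.symm (FreeGroup.of b)) := by
  simp [fgSumCongrLeft]

theorem fgSumCongrLeft_symm_apply_inr {α β γ : Type} (w : FreeGroup α ≃* FreeGroup β) (c : γ) :
    (fgSumCongrLeft w).symm (FreeGroup.of (Sum.inr c)) = FreeGroup.of (Sum.inr c) := by
  simp [fgSumCongrLeft]

/-- `Fin m ⊕ ℕ ≃ ℕ`. -/
def finSumNat (m : ℕ) : (Fin m ⊕ ℕ) ≃ ℕ where
  toFun := Sum.elim Fin.val fun t => m + t
  invFun i := if h : i < m then Sum.inl ⟨i, h⟩ else Sum.inr (i - m)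
  left_inv := by
    rintro (⟨i, h⟩ | t)
    · simp [h]
    · dsimp only [Sum.elim_inr]
      rw [dif_neg (by omega)]
      simp
  right_inv := by
    intro i
    by_cases h : i < m
    · simp [h]
    · dsimp only
      rw [dif_neg h]
      dsimp only [Sum.elim_inr]
      omega

/-- `(Fin n ⊕ Fin k) ⊕ ℕ ≃ ℕ`. -/
def flattenEquiv (n k : ℕ) : ((Fin n ⊕ Fin k) ⊕ ℕ) ≃ ℕ where
  toFun := Sum.elim (Sum.elim Fin.val fun j => n + (j : ℕ)) fun t => (n + k) + t
  invFun i := if h : i < n then Sum.inl (Sum.inl ⟨i, h⟩)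
    else if h2 : i < n + k then Sum.inl (Sum.inr ⟨i - n, by omega⟩)
    else Sum.inr (i - (n + k))
  left_inv := by
    rintro ((⟨i, h⟩ | ⟨j, h⟩) | t)
    · simp [h]
    · dsimp only [Sum.elim_inl, Sum.elim_inr]
      rw [dif_neg (by omega), dif_pos (by omega)]
      simp
    · dsimp only [Sum.elim_inr]
      rw [dif_neg (by omega), dif_neg (by omega)]
      simp
  right_inv := by
    intro i
    by_cases h : i < n
    · simp [h]
    · by_cases h2 : i < n + k
      · dsimp only
        rw [dif_neg h, dif_pos h2]
        dsimp only [Sum.elim_inl, Sum.elim_inr]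
        omega
      · dsimp only
        rw [dif_neg h, dif_neg h2]
        dsimp only [Sum.elim_inr]
        omega

end Approx

namespace Approx

open FreeGroup

local notation "F∞" => FreeGroup ℕ

theorem main (φ : MulAut F∞) (n : ℕ) :
    ∃ (ψ : MulAut F∞) (m : ℕ), n ≤ m ∧
      (∀ x ∈ A n, ψ x = φ x) ∧ (∀ x ∈ B m, ψ x = x) := by
  obtain ⟨m, hnm, hm0, hφ⟩ := exists_bound φ n
  set Q : Subgroup F∞ := (A m).comap φ.toMonoidHom with hQdef
  obtain ⟨S, b, hb⟩ := MarkedNS.subgroup_marked_basis Q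
  have hofiQ : ∀ i : Fin n, FreeGroup.of (i : ℕ) ∈ Q := fun i =>
    Subgroup.mem_comap.mpr (hφ i i.2)
  choose σ hσ using fun i : Fin n => hb (i : ℕ) (hofiQ i)
  have hσinj : Function.Injective σ := by
    intro i j hij
    have h1 : (FreeGroup.of (i : ℕ) : F∞) = FreeGroup.of (j : ℕ) := by
      rw [← hσ i, ← hσ j, hij]
    exact Fin.val_injective (FreeGroup.of_injective h1)
  have hmap : Q.map φ.toMonoidHom = A m :=
    Subgroup.map_comap_eq_self_of_surjective φ.surjective _
  let eQ : ↥Q ≃* ↥(A m) :=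
    ((φ : F∞ ≃* F∞).subgroupMap Q).trans (MulEquiv.subgroupCongr hmap)
  have heQ : ∀ q : ↥Q, ((eQ q : ↥(A m)) : F∞) = φ (q : F∞) := fun q =>
    MulEquiv.coe_subgroupMap_apply _ _ _
  let wS : FreeGroup S ≃* FreeGroup (Fin m) :=
    (b.repr.symm.trans eQ).trans (basisAm m hm0).symm
  obtain ⟨eqv⟩ := rank_eq wS
  haveI : Fintype S := Fintype.ofEquiv _ eqv.symm
  have hcard : Fintype.card S = m := by rw [Fintype.card_congr eqv, Fintype.card_fin]
  obtain ⟨τ, hτ⟩ := marked_equiv hcard hnm σ hσinj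
  let c1 : F∞ ≃* FreeGroup (Fin m ⊕ ℕ) := (freeGroupCongr (finSumNat m)).symm
  let c2 : FreeGroup (Fin m ⊕ ℕ) ≃* FreeGroup (S ⊕ ℕ) := fgSumCongrLeft wS.symm
  let gnat : (S ⊕ ℕ) ≃ ℕ := (Equiv.sumCongr τ.symm (Equiv.refl ℕ)).trans (flattenEquiv n (m - n))
  let c3 : FreeGroup (S ⊕ ℕ) ≃* F∞ := freeGroupCongr gnat
  let ψ' : F∞ ≃* F∞ := c3.symm.trans (c2.symm.trans (c1.symm.trans (φ : F∞ ≃* F∞).symm))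
  let ψ : MulAut F∞ := MulEquiv.trans ψ' (φ : F∞ ≃* F∞)
  have key : ∀ s : S,
      (φ : F∞ ≃* F∞).symm (c1.symm (c2.symm (FreeGroup.of (Sum.inl s)))) = ((b s : ↥Q) : F∞) := by
    intro s
    have h2 : c2.symm (FreeGroup.of (Sum.inl s)) = FreeGroup.map Sum.inl (wS (FreeGroup.of s)) := by
      have h := fgSumCongrLeft_symm_apply_inl (γ := ℕ) wS.symm s
      rw [MulEquiv.symm_symm] at h
      exact h
    have h1 : c1.symm (FreeGroup.map Sum.inl (wS (FreeGroup.of s)))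
        = vmap m (wS (FreeGroup.of s)) := by
      show freeGroupCongr (finSumNat m) (FreeGroup.map Sum.inl (wS (FreeGroup.of s))) = _
      rw [FreeGroup.freeGroupCongr_apply, FreeGroup.map.comp]
      rfl
    have h0 : vmap m (wS (FreeGroup.of s))
        = ((eQ (b.repr.symm (FreeGroup.of s)) : ↥(A m)) : F∞) := by
      show vmap m ((basisAm m hm0).symm (eQ (b.repr.symm (FreeGroup.of s)))) = _
      rw [← basisAm_apply m hm0, MulEquiv.apply_symm_apply]
    rw [h2, h1, h0, heQ]
    exact MulEquiv.symm_apply_apply _ _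
  have hlo : ∀ i : Fin n, ψ' (FreeGroup.of (i : ℕ)) = FreeGroup.of (i : ℕ) := by
    intro i
    have hg : gnat (Sum.inl (σ i)) = (i : ℕ) := by
      have hts : τ.symm (σ i) = Sum.inl i := by
        rw [Equiv.symm_apply_eq, hτ]
      show flattenEquiv n (m - n) (Sum.map τ.symm id (Sum.inl (σ i))) = (i : ℕ)
      rw [Sum.map_inl, hts]
      rfl
    have h3 : c3.symm (FreeGroup.of (i : ℕ)) = FreeGroup.of (Sum.inl (σ i)) := by
      rw [← hg]
      show (freeGroupCongr gnat).symm (freeGroupCongr gnat (FreeGroup.of (Sum.inl (σ i)))) = _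
      rw [MulEquiv.symm_apply_apply]
    show (φ : F∞ ≃* F∞).symm (c1.symm (c2.symm (c3.symm (FreeGroup.of (i : ℕ))))) = _
    rw [h3, key (σ i), hσ i]
  have hhi : ∀ t : ℕ, ψ' (FreeGroup.of (m + t)) = (φ : F∞ ≃* F∞).symm (FreeGroup.of (m + t)) := by
    intro t
    have hg : gnat (Sum.inr t) = m + t := by
      show flattenEquiv n (m - n) (Sum.map τ.symm id (Sum.inr t)) = m + t
      rw [Sum.map_inr]
      show (n + (m - n)) + t = m + t
      omega
    have h3 : c3.symm (FreeGroup.of (m + t)) = FreeGroup.of (Sum.inr t) := by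
      rw [← hg]
      show (freeGroupCongr gnat).symm (freeGroupCongr gnat (FreeGroup.of (Sum.inr t))) = _
      rw [MulEquiv.symm_apply_apply]
    have h2 : c2.symm (FreeGroup.of (Sum.inr t)) = FreeGroup.of (Sum.inr t) :=
      fgSumCongrLeft_symm_apply_inr _ t
    have h1 : c1.symm (FreeGroup.of (Sum.inr t)) = FreeGroup.of (m + t) := by
      show freeGroupCongr (finSumNat m) (FreeGroup.of (Sum.inr t)) = _
      rw [FreeGroup.freeGroupCongr_apply, FreeGroup.map.of]
      rfl
    show (φ : F∞ ≃* F∞).symm (c1.symm (c2.symm (c3.symm (FreeGroup.of (m + t))))) = _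
    rw [h3, h2, h1]
  refine ⟨ψ, m, hnm, ?_, ?_⟩
  · have hle : A n ≤ MonoidHom.eqLocus ψ.toMonoidHom φ.toMonoidHom := by
      refine (Subgroup.closure_le _).mpr ?_
      rintro x ⟨i, hi, rfl⟩
      show ψ (FreeGroup.of i) = φ (FreeGroup.of i)
      show φ (ψ' (FreeGroup.of i)) = φ (FreeGroup.of i)
      rw [hlo ⟨i, hi⟩]
    intro x hx
    exact hle hx
  · have hle : B m ≤ MonoidHom.eqLocus ψ.toMonoidHom (MonoidHom.id F∞) := by
      refine (Subgroup.closure_le _).mpr ?_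
      rintro x ⟨j, hj, rfl⟩
      show ψ (FreeGroup.of j) = FreeGroup.of j
      show φ (ψ' (FreeGroup.of j)) = FreeGroup.of j
      have hj' : j = m + (j - m) := by
        have : m ≤ j := hj
        omega
      rw [hj', hhi (j - m)]
      exact MulEquiv.apply_symm_apply _ _
    intro x hx
    exact hle hx

end Approx


/-- Any automorphism of `F∞` agrees on `A n` with an automorphism `ψ` that is the
identity on `B m` for some `m ≥ n`. -/
theorem exists_finitely_supported_approximation (φ : MulAut (FreeGroup ℕ)) (n : ℕ) :
    ∃ (ψ : MulAut (FreeGroup ℕ)) (m : ℕ), n ≤ m ∧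
      (∀ x ∈ A n, ψ x = φ x) ∧ (∀ x ∈ B m, ψ x = x) :=
  Approx.main φ n
end
end

section
/- The subgroup Inn(F∞) of inner automorphisms is a closed subgroup of Aut(F∞) with respect to the permutation topology. -/
/-
An automorphism `f` in the closure of `Inn(F∞)` agrees on each finite set of generators with
some inner automorphism. In a free group the centralizer of a generator `a` is `⟨a⟩`, so only `1`
centralizes two distinct generators, and an inner automorphism is determined by its values on
`a₀` and `a₁`. Hence the inner automorphisms agreeing with `f` on `{a₀, a₁, aₙ}` are all
conjugation by the same `g`, and `f = conj g` on every generator.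
-/

/-- The free group of countably infinite rank, with the discrete topology. -/
instance : TopologicalSpace (FreeGroup ℕ) := ⊥
instance : DiscreteTopology (FreeGroup ℕ) := ⟨rfl⟩

/-- The permutation topology on `Aut(F∞)`: induced from the product topology on
the space of functions `F∞ → F∞` (with `F∞` discrete). -/
instance : TopologicalSpace (MulAut (FreeGroup ℕ)) :=
  TopologicalSpace.induced (fun f => (f : FreeGroup ℕ → FreeGroup ℕ)) Pi.topologicalSpace

theorem Subgroup.zpowers_le_centralizer_singleton {G : Type*} [Group G] (g : G) :
    Subgroup.zpowers g ≤ Subgroup.centralizer {g} :=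
  Subgroup.zpowers_le.mpr (Subgroup.mem_centralizer_singleton_iff.mpr rfl)

theorem MulAut.eqOn_conj_iff {G : Type*} [Group G] {g h : G} {s : Set G} :
    Set.EqOn (MulAut.conj g) (MulAut.conj h) s ↔ g⁻¹ * h ∈ Subgroup.centralizer s := by
  simp only [Set.EqOn, Subgroup.mem_centralizer_iff, MulAut.conj_apply]
  refine forall₂_congr fun x _ => ⟨fun e => ?_, fun e => ?_⟩
  · calc x * (g⁻¹ * h) = g⁻¹ * (g * x * g⁻¹) * h := by group
      _ = g⁻¹ * h * x := by rw [e]; group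
  · calc g * x * g⁻¹ = g * (x * (g⁻¹ * h)) * h⁻¹ := by group
      _ = h * x * h⁻¹ := by rw [e]; group

namespace FreeGroup

variable {α : Type*}

theorem IsReduced.cons_append_singleton {L : List (α × Bool)} {a : α} (b c : Bool)
    (hL : IsReduced L) (hne : L ≠ []) (hhead : ∀ x ∈ L.head?, x.1 ≠ a)
    (hlast : ∀ x ∈ L.getLast?, x.1 ≠ a) : IsReduced ((a, b) :: L ++ [(a, c)]) := by
  refine List.IsChain.append (List.IsChain.cons hL fun x hx h => absurd h.symm (hhead x hx))
    (List.isChain_singleton _) ?_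
  rintro x hx _ ⟨⟩ h
  rw [← List.singleton_append, List.getLast?_append_of_ne_nil _ hne] at hx
  exact absurd h (hlast x hx)

theorem mk_singleton_mem_zpowers (a : α) (b : Bool) : mk [(a, b)] ∈ Subgroup.zpowers (of a) := by
  cases b
  · exact inv_mem (Subgroup.mem_zpowers (of a))
  · exact Subgroup.mem_zpowers (of a)

theorem toWord_of_mul_mul_inv_of [DecidableEq α] {a : α} {x : FreeGroup α} (hx : x ≠ 1)
    (hhead : ∀ y ∈ x.toWord.head?, y.1 ≠ a) (hlast : ∀ y ∈ x.toWord.getLast?, y.1 ≠ a) :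
    toWord (of a * x * (of a)⁻¹) = (a, true) :: x.toWord ++ [(a, false)] := by
  have hred := isReduced_toWord.cons_append_singleton true false
    (mt toWord_eq_nil_iff.mp hx) hhead hlast
  rw [← hred.reduce_eq, ← toWord_mk]
  conv_lhs => rw [← mk_toWord (x := x)]
  exact congrArg toWord (mul_mk.trans mul_mk)

theorem mem_zpowers_of_mem_centralizer {a : α} {x : FreeGroup α}
    (hx : x ∈ Subgroup.centralizer {of a}) : x ∈ Subgroup.zpowers (of a) := by
  classical
  induction hn : norm x using Nat.strong_induction_on generalizing x with
  | _ n ih =>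
  subst hn
  have zpowers_le := Subgroup.zpowers_le_centralizer_singleton (of a)
  by_cases hstart : ∃ b L, toWord x = (a, b) :: L
  · obtain ⟨b, L, hw⟩ := hstart
    have hs := mk_singleton_mem_zpowers a b
    have hlen : norm (mk L) < norm x := norm_mk_le.trans_lt (by simp [norm, hw])
    rw [← mk_toWord (x := x), hw, ← List.singleton_append, ← mul_mk] at hx ⊢
    exact mul_mem hs (ih _ hlen ((Subgroup.mul_mem_cancel_left _ (zpowers_le hs)).mp hx) rfl)
  by_cases hend : ∃ b L, toWord x = L ++ [(a, b)]
  · obtain ⟨b, L, hw⟩ := hend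
    have hs := mk_singleton_mem_zpowers a b
    have hlen : norm (mk L) < norm x := norm_mk_le.trans_lt (by simp [norm, hw])
    rw [← mk_toWord (x := x), hw, ← mul_mk] at hx ⊢
    exact mul_mem (ih _ hlen ((Subgroup.mul_mem_cancel_right _ (zpowers_le hs)).mp hx) rfl) hs
  -- Otherwise conjugation by `of a` would lengthen the reduced word of `x` by two.
  by_cases hone : x = 1
  · exact hone ▸ one_mem _
  have hhead : ∀ y ∈ x.toWord.head?, y.1 ≠ a := by
    rintro ⟨_, b⟩ hy rfl
    obtain ⟨L, hL⟩ := List.head?_eq_some_iff.mp hy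
    exact hstart ⟨b, L, hL⟩
  have hlast : ∀ y ∈ x.toWord.getLast?, y.1 ≠ a := by
    rintro ⟨_, b⟩ hy rfl
    obtain ⟨L, hL⟩ := List.getLast?_eq_some_iff.mp hy
    exact hend ⟨b, L, hL⟩
  have hconj : of a * x * (of a)⁻¹ = x := by
    rw [← Subgroup.mem_centralizer_singleton_iff.mp hx, mul_inv_cancel_right]
  have := congrArg List.length (toWord_of_mul_mul_inv_of hone hhead hlast)
  rw [hconj, List.length_append, List.length_cons] at this
  omega

theorem centralizer_of (a : α) : Subgroup.centralizer {of a} = Subgroup.zpowers (of a) :=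
  le_antisymm (fun _ => mem_zpowers_of_mem_centralizer)
    (Subgroup.zpowers_le_centralizer_singleton (of a))

theorem centralizer_pair_of {a b : α} (hab : a ≠ b) :
    Subgroup.centralizer {of a, of b} = ⊥ := by
  refine eq_bot_iff.mpr fun x hx => ?_
  obtain ⟨m, rfl⟩ := Subgroup.mem_zpowers_iff.mp <| (centralizer_of a).le <|
    Subgroup.centralizer_le (Set.singleton_subset_iff.mpr (by simp)) hx
  obtain ⟨k, hk⟩ := Subgroup.mem_zpowers_iff.mp <| (centralizer_of b).le <|
    Subgroup.centralizer_le (Set.singleton_subset_iff.mpr (by simp)) hx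
  classical
  let retract : FreeGroup α →* FreeGroup α := lift fun c => if c = a then of a else 1
  calc of a ^ m = retract (of a ^ m) := by simp [retract]
    _ = retract (of b ^ k) := by rw [hk]
    _ = 1 := by simp [retract, hab.symm]

theorem eq_of_eqOn_conj_pair_of {a b : α} (hab : a ≠ b) {g h : FreeGroup α}
    (H : Set.EqOn (MulAut.conj g) (MulAut.conj h) {of a, of b}) : g = h := by
  rw [← inv_mul_eq_one, ← Subgroup.mem_bot, ← centralizer_pair_of hab]
  exact MulAut.eqOn_conj_iff.mp H

end FreeGroup

theorem exists_eqOn_of_mem_closure {A : Set (MulAut (FreeGroup ℕ))} {f : MulAut (FreeGroup ℕ)}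
    (hf : f ∈ closure A) {s : Set (FreeGroup ℕ)} (hs : s.Finite) :
    ∃ ψ ∈ A, Set.EqOn ψ f s := by
  have hopen : IsOpen {ψ : MulAut (FreeGroup ℕ) | Set.EqOn ψ f s} :=
    (isOpen_set_pi hs fun x _ => isOpen_discrete {f x}).preimage continuous_induced_dom
  obtain ⟨ψ, hψ, hψA⟩ := mem_closure_iff.mp hf _ hopen fun _ _ => rfl
  exact ⟨ψ, hψA, hψ⟩

/-- `Inn(F∞)` is closed in `Aut(F∞)` with the permutation topology. -/
theorem innFreeGroupInfinite_isClosed :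
    IsClosed (((MulAut.conj : FreeGroup ℕ →* MulAut (FreeGroup ℕ)).range :
      Subgroup (MulAut (FreeGroup ℕ))) : Set (MulAut (FreeGroup ℕ))) := by
  refine isClosed_of_closure_subset fun f hf => ?_
  obtain ⟨_, ⟨g, rfl⟩, hg⟩ :=
    exists_eqOn_of_mem_closure hf (s := {FreeGroup.of 0, FreeGroup.of 1}) (Set.toFinite _)
  refine ⟨g, MulEquiv.toMonoidHom_injective (FreeGroup.ext_hom _ _ fun n => ?_)⟩
  obtain ⟨_, ⟨h, rfl⟩, hh⟩ := exists_eqOn_of_mem_closure hf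
    (s := {FreeGroup.of 0, FreeGroup.of 1, FreeGroup.of n}) (Set.toFinite _)
  obtain rfl : g = h := FreeGroup.eq_of_eqOn_conj_pair_of zero_ne_one
    (hg.trans (hh.mono (by simp [Set.insert_subset_iff])).symm)
  exact hh (by simp)
end

section
/- Out(F∞) = Aut(F∞)/Inn(F∞), equipped with the quotient of the permutation topology on Aut(F∞), is a Polish group: it is a topological group whose topology is second countable and completely metrizable. -/
noncomputable section

/-- The subgroup of inner automorphisms of `F∞`. -/
def InnFG : Subgroup (MulAut (FreeGroup ℕ)) :=
  (MulAut.conj : FreeGroup ℕ →* MulAut (FreeGroup ℕ)).range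

instance : InnFG.Normal := by
  constructor
  rintro a ⟨x, rfl⟩ g
  exact ⟨g x, by ext y; simp [MulAut.conj]⟩

/-- `Out(F∞) = Aut(F∞)/Inn(F∞)`, with the quotient topology. -/
abbrev OutFG := MulAut (FreeGroup ℕ) ⧸ InnFG

section Aux

open FreeGroup

lemma cons_mul_toWord (i : ℕ) (b : Bool) (z : FreeGroup ℕ) :
    (FreeGroup.mk [(i,b)] * z).toWord =
      if z.toWord.head? = some (i, !b) then z.toWord.tail else (i,b) :: z.toWord := by
  conv_lhs => rw [← FreeGroup.mk_toWord (x := z)]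
  rw [FreeGroup.mul_mk, FreeGroup.toWord_mk]
  show FreeGroup.reduce ((i,b) :: z.toWord) = _
  rw [FreeGroup.reduce.cons, FreeGroup.reduce_toWord]
  cases h : z.toWord with
  | nil => simp
  | cons hd tl =>
    rcases hd with ⟨j, c⟩
    by_cases hji : i = j
    · subst hji
      cases b <;> cases c <;> simp
    · simp [hji, Ne.symm hji]

lemma red_eq_of_length_eq {L M : List (ℕ × Bool)} (h : FreeGroup.Red L M)
    (hl : L.length ≤ M.length) : L = M :=
  (h.sublist.eq_of_length_le hl).symm

lemma append_singleton_eq_cons {c : ℕ × Bool} : ∀ {w : List (ℕ × Bool)},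
    w ++ [c] = c :: w → ∀ x ∈ w, x = c := by
  intro w
  induction w with
  | nil => simp
  | cons d t ih =>
    intro h x hx
    simp only [List.cons_append, List.cons.injEq] at h
    obtain ⟨rfl, h2⟩ := h
    rcases hx with _ | hx
    · rfl
    · exact ih h2 x (by assumption)

lemma of_eq_mk (i : ℕ) : FreeGroup.of i = FreeGroup.mk [(i, true)] := rfl

lemma inv_of_eq_mk (i : ℕ) : (FreeGroup.of i)⁻¹ = FreeGroup.mk [(i, false)] := by
  rw [of_eq_mk, FreeGroup.inv_mk]
  simp [FreeGroup.invRev]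

lemma claimA_aux (i : ℕ) : ∀ n : ℕ, ∀ z : FreeGroup ℕ, z.toWord.length ≤ n →
    z * of i = of i * z → ∃ m : ℤ, z = of i ^ m := by
  intro n
  induction n with
  | zero =>
    intro z hz _
    refine ⟨0, by simpa using FreeGroup.toWord_eq_nil_iff.1 (List.eq_nil_of_length_eq_zero (Nat.le_zero.1 hz))⟩
  | succ n ih =>
    intro z hz h
    cases hw : z.toWord with
    | nil => exact ⟨0, by simpa using FreeGroup.toWord_eq_nil_iff.1 hw⟩
    | cons hd tl =>
      obtain ⟨j, b⟩ := hd
      by_cases hj : j = i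
      · subst hj
        cases b
        · -- starts with (j, false) : z' = of j * z has word tl
          have ht : (of j * z).toWord = tl := by
            rw [of_eq_mk, cons_mul_toWord]
            simp [hw]
          have hlen : (of j * z).toWord.length ≤ n := by
            rw [ht]
            rw [hw] at hz
            simpa using Nat.lt_succ_iff.mp (Nat.lt_of_lt_of_le (Nat.lt_succ_self _) hz)
          have hcomm : (of j * z) * of j = of j * (of j * z) := by
            rw [mul_assoc, h]
          obtain ⟨m, hm⟩ := ih (of j * z) hlen hcomm
          refine ⟨m - 1, ?_⟩
          have hzz : z = (of j)⁻¹ * (of j * z) := by group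
          rw [hzz, hm]
          group
        · -- starts with (j, true) : z' = (of j)⁻¹ * z has word tl
          have ht : ((of j)⁻¹ * z).toWord = tl := by
            rw [inv_of_eq_mk, cons_mul_toWord]
            simp [hw]
          have hlen : ((of j)⁻¹ * z).toWord.length ≤ n := by
            rw [ht]
            rw [hw] at hz
            simpa using Nat.lt_succ_iff.mp (Nat.lt_of_lt_of_le (Nat.lt_succ_self _) hz)
          have hcomm : ((of j)⁻¹ * z) * of j = of j * ((of j)⁻¹ * z) := by
            rw [mul_assoc, h]
            group
          obtain ⟨m, hm⟩ := ih ((of j)⁻¹ * z) hlen hcomm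
          refine ⟨m + 1, ?_⟩
          have hzz : z = of j * ((of j)⁻¹ * z) := by group
          rw [hzz, hm]
          group
      · -- contradiction case
        exfalso
        have h1 : (of i * z).toWord = (i, true) :: z.toWord := by
          rw [of_eq_mk, cons_mul_toWord]
          simp [hw, hj]
        have h2 : of i * z = FreeGroup.mk (z.toWord ++ [(i, true)]) := by
          rw [← h]
          conv_lhs => rw [← FreeGroup.mk_toWord (x := z), of_eq_mk, FreeGroup.mul_mk]
        have h3 : FreeGroup.reduce (z.toWord ++ [(i, true)]) = (i, true) :: z.toWord := by
          rw [← FreeGroup.toWord_mk, ← h2, h1]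
        have hred : FreeGroup.Red (z.toWord ++ [(i, true)]) ((i, true) :: z.toWord) := by
          rw [← h3]; exact FreeGroup.reduce.red
        have heq : z.toWord ++ [(i, true)] = (i, true) :: z.toWord :=
          red_eq_of_length_eq hred (by simp)
        have : (j, b) ∈ z.toWord := by rw [hw]; exact List.mem_cons_self
        have := append_singleton_eq_cons heq _ this
        exact hj (by simpa using congrArg Prod.fst this)

lemma commute_of_zpow {i : ℕ} {z : FreeGroup ℕ} (h : z * of i = of i * z) :
    ∃ m : ℤ, z = of i ^ m :=
  claimA_aux i z.toWord.length z le_rfl h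

/-- The key centralizer lemma: an element commuting with both `of 0` and `of 1` is trivial. -/
lemma eq_one_of_commute_of_of {z : FreeGroup ℕ}
    (h0 : z * of 0 = of 0 * z) (h1 : z * of 1 = of 1 * z) : z = 1 := by
  obtain ⟨m, rfl⟩ := commute_of_zpow h0
  obtain ⟨k, hk⟩ := commute_of_zpow h1
  have hφ := congrArg (FreeGroup.lift (fun j : ℕ => if j = 0 then Multiplicative.ofAdd (1 : ℤ) else 1)) hk
  simp only [map_zpow, FreeGroup.lift_apply_of] at hφ
  simp only [if_pos rfl, if_neg (by norm_num : (1:ℕ) ≠ 0)] at hφ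
  have : m = 0 := by
    have := congrArg Multiplicative.toAdd hφ
    simpa using this
  rw [this, zpow_zero]

end Aux

abbrev FG := FreeGroup ℕ

instance : Countable (FreeGroup ℕ) :=
  (Function.Surjective.countable (f := (FreeGroup.mk : List (ℕ × Bool) → FreeGroup ℕ))
    (fun x => ⟨x.toWord, FreeGroup.mk_toWord⟩))
abbrev AutF := MulAut (FreeGroup ℕ)

lemma continuous_coeAut : Continuous (fun f : AutF => (f : FG → FG)) :=
  continuous_induced_dom

lemma continuous_evalAut (w : FG) : Continuous (fun f : AutF => f w) :=
  (continuous_apply w).comp continuous_coeAut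

lemma continuous_eval₂ {X : Type*} [TopologicalSpace X] {A : X → FG → FG}
    (hA : ∀ v, Continuous fun x => A x v) {B : X → FG} (hB : Continuous B) :
    Continuous fun x => A x (B x) := by
  rw [continuous_discrete_rng]
  intro c
  have : (fun x => A x (B x)) ⁻¹' {c} = ⋃ u, (B ⁻¹' {u}) ∩ ((fun x => A x u) ⁻¹' {c}) := by
    ext x; simp
  rw [this]
  exact isOpen_iUnion fun u =>
    ((hB.isOpen_preimage _ (isOpen_discrete _)).inter ((hA u).isOpen_preimage _ (isOpen_discrete _)))

instance : IsTopologicalGroup AutF where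
  continuous_mul := by
    apply continuous_induced_rng.2
    apply continuous_pi
    intro w
    simp only [Function.comp_def]
    have : ∀ p : AutF × AutF, (p.1 * p.2) w = p.1 (p.2 w) := fun p => rfl
    simp only [this]
    exact continuous_eval₂ (fun v => (continuous_evalAut v).comp continuous_fst)
      ((continuous_evalAut w).comp continuous_snd)
  continuous_inv := by
    apply continuous_induced_rng.2
    apply continuous_pi
    intro w
    show Continuous fun f : AutF => (f⁻¹ : AutF) w
    rw [continuous_discrete_rng]
    intro v
    have : (fun f : AutF => (f⁻¹ : AutF) w) ⁻¹' {v} = (fun f : AutF => f v) ⁻¹' {w} := by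
      ext f
      simp only [Set.mem_preimage, Set.mem_singleton_iff]
      constructor
      · rintro rfl; exact (f.apply_symm_apply w)
      · rintro rfl; exact (f.symm_apply_apply v)
    rw [this]
    exact (continuous_evalAut v).isOpen_preimage _ (isOpen_discrete _)

def PhiAut : AutF → (FG → FG) × (FG → FG) := fun f => (⇑f, ⇑(f⁻¹ : AutF))

lemma isClosedEmbedding_PhiAut : Topology.IsClosedEmbedding PhiAut := by
  have hcont : Continuous PhiAut := by
    apply Continuous.prodMk continuous_coeAut
    exact continuous_coeAut.comp continuous_inv
  refine ⟨⟨Topology.IsInducing.of_comp hcont continuous_fst ⟨rfl⟩, ?_⟩, ?_⟩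
  · intro f g h
    exact DFunLike.coe_injective (congrArg Prod.fst h)
  · have : Set.range PhiAut =
        (⋂ x, ⋂ y, {p : (FG → FG) × (FG → FG) | p.1 (x*y) = p.1 x * p.1 y}) ∩
        ((⋂ x, {p : (FG → FG) × (FG → FG) | p.1 (p.2 x) = x}) ∩
         (⋂ x, {p : (FG → FG) × (FG → FG) | p.2 (p.1 x) = x})) := by
      ext p
      simp only [Set.mem_range, Set.mem_inter_iff, Set.mem_iInter, Set.mem_setOf_eq]
      constructor
      · rintro ⟨f, rfl⟩
        refine ⟨fun x y => map_mul f x y, fun x => f.apply_symm_apply x, fun x => f.symm_apply_apply x⟩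
      · rintro ⟨hmul, hfg, hgf⟩
        exact ⟨{ toFun := p.1, invFun := p.2, left_inv := hgf, right_inv := hfg,
                 map_mul' := hmul }, rfl⟩
    rw [this]
    have hd : ∀ w : FG, Continuous (fun p : (FG → FG) × (FG → FG) => p.1 w) :=
      fun w => (continuous_apply w).comp continuous_fst
    have hd2 : ∀ w : FG, Continuous (fun p : (FG → FG) × (FG → FG) => p.2 w) :=
      fun w => (continuous_apply w).comp continuous_snd
    refine IsClosed.inter (isClosed_iInter fun x => isClosed_iInter fun y => ?_)
      (IsClosed.inter (isClosed_iInter fun x => ?_) (isClosed_iInter fun x => ?_))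
    · exact isClosed_eq (hd (x*y))
        (((continuous_of_discreteTopology (f := fun q : FG × FG => q.1 * q.2))).comp
          ((hd x).prodMk (hd y)))
    · exact isClosed_eq (continuous_eval₂ hd (hd2 x)) continuous_const
    · exact isClosed_eq (continuous_eval₂ hd2 (hd x)) continuous_const

instance : PolishSpace (FG → FG) := {}

instance : PolishSpace AutF := isClosedEmbedding_PhiAut.polishSpace

instance : T2Space AutF := isClosedEmbedding_PhiAut.isEmbedding.t2Space

def Orb (p : FG × FG) : Set (FG × FG) :=
  Set.range (fun x : FG => (x * p.1 * x⁻¹, x * p.2 * x⁻¹))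

lemma orb_nonempty (p : FG × FG) : (Orb p).Nonempty := ⟨p, 1, by simp⟩

lemma orb_eq {p q : FG × FG} (h : q ∈ Orb p) : Orb q = Orb p := by
  obtain ⟨z, rfl⟩ := h
  ext r
  constructor
  · rintro ⟨x, rfl⟩
    refine ⟨x * z, ?_⟩
    dsimp only
    simp only [Prod.mk.injEq]
    constructor <;> group
  · rintro ⟨x, rfl⟩
    refine ⟨x * z⁻¹, ?_⟩
    dsimp only
    simp only [Prod.mk.injEq]
    constructor <;> group

open scoped Classical in
/-- choice of a canonical element in each nonempty set -/
def pick (s : Set (FG × FG)) : FG × FG := if h : s.Nonempty then h.some else (1, 1)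

lemma pick_mem {s : Set (FG × FG)} (h : s.Nonempty) : pick s ∈ s := by
  rw [pick]
  split
  · next h' => exact h'.some_mem
  · next h' => exact absurd h h'

def canonP (p : FG × FG) : FG × FG := pick (Orb p)

lemma canonP_mem (p : FG × FG) : canonP p ∈ Orb p := pick_mem (orb_nonempty p)

lemma canonP_eq {p q : FG × FG} (h : q ∈ Orb p) : canonP q = canonP p := by
  rw [canonP, canonP, orb_eq h]

/-- canonical conjugator -/
def yconj (p : FG × FG) : FG := (Set.mem_range.1 (canonP_mem p)).choose

lemma yconj_spec (p : FG × FG) :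
    (yconj p * p.1 * (yconj p)⁻¹, yconj p * p.2 * (yconj p)⁻¹) = canonP p :=
  (Set.mem_range.1 (canonP_mem p)).choose_spec

/-- the canonical representative of the coset of `g` -/
def rmap (g : AutF) : AutF :=
  MulAut.conj (yconj (g (.of 0), g (.of 1))) * g

lemma rmap_apply (g : AutF) (w : FG) :
    rmap g w = yconj (g (.of 0), g (.of 1)) * g w * (yconj (g (.of 0), g (.of 1)))⁻¹ := by
  rw [rmap, MulAut.mul_apply, MulAut.conj_apply]

lemma conj_mulaut (g : AutF) (x : FG) :
    MulAut.conj (g x) * g = g * MulAut.conj x := by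
  ext w
  simp [MulAut.conj_apply, MulAut.mul_apply, map_mul]

/-- uniqueness of conjugators sending `(g a₀, g a₁)` to a fixed pair -/
lemma conj_eq_unique {g : AutF} {a b : FG}
    (h0 : a * g (FreeGroup.of 0) * a⁻¹ = b * g (FreeGroup.of 0) * b⁻¹)
    (h1 : a * g (FreeGroup.of 1) * a⁻¹ = b * g (FreeGroup.of 1) * b⁻¹) : a = b := by
  have c0 : (b⁻¹ * a) * g (FreeGroup.of 0) = g (FreeGroup.of 0) * (b⁻¹ * a) := by
    calc (b⁻¹ * a) * g (FreeGroup.of 0)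
        = b⁻¹ * (a * g (FreeGroup.of 0) * a⁻¹) * a := by group
      _ = b⁻¹ * (b * g (FreeGroup.of 0) * b⁻¹) * a := by rw [h0]
      _ = g (FreeGroup.of 0) * (b⁻¹ * a) := by group
  have c1 : (b⁻¹ * a) * g (FreeGroup.of 1) = g (FreeGroup.of 1) * (b⁻¹ * a) := by
    calc (b⁻¹ * a) * g (FreeGroup.of 1)
        = b⁻¹ * (a * g (FreeGroup.of 1) * a⁻¹) * a := by group
      _ = b⁻¹ * (b * g (FreeGroup.of 1) * b⁻¹) * a := by rw [h1]
      _ = g (FreeGroup.of 1) * (b⁻¹ * a) := by group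
  have d0 : g.symm (b⁻¹ * a) * FreeGroup.of 0 = FreeGroup.of 0 * g.symm (b⁻¹ * a) := by
    have := congrArg g.symm c0
    simpa [map_mul] using this
  have d1 : g.symm (b⁻¹ * a) * FreeGroup.of 1 = FreeGroup.of 1 * g.symm (b⁻¹ * a) := by
    have := congrArg g.symm c1
    simpa [map_mul] using this
  have h1' : g.symm (b⁻¹ * a) = 1 := eq_one_of_commute_of_of d0 d1
  have : b⁻¹ * a = 1 := by
    have := congrArg g h1'
    simpa using this
  have := congrArg (fun t => b * t) this
  simpa using this

/-- key invariance: `rmap` only depends on the coset. -/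
lemma rmap_invariant {g g' : AutF} (h : g⁻¹ * g' ∈ InnFG) : rmap g' = rmap g := by
  obtain ⟨x, hx⟩ := h
  have hg' : g' = g * MulAut.conj x := by rw [hx]; group
  subst hg'
  have hval : ∀ i : ℕ, (g * MulAut.conj x) (FreeGroup.of i)
      = g x * g (FreeGroup.of i) * (g x)⁻¹ := fun i => by
    simp [MulAut.mul_apply, MulAut.conj_apply, map_mul]
  have hmem : ((g * MulAut.conj x) (FreeGroup.of 0), (g * MulAut.conj x) (FreeGroup.of 1))
      ∈ Orb (g (FreeGroup.of 0), g (FreeGroup.of 1)) := by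
    refine ⟨g x, ?_⟩
    dsimp only
    rw [Prod.mk.injEq]
    exact ⟨(hval 0).symm, (hval 1).symm⟩
  have hcanon := canonP_eq hmem
  have s1 := yconj_spec ((g * MulAut.conj x) (FreeGroup.of 0), (g * MulAut.conj x) (FreeGroup.of 1))
  have s2 := yconj_spec ((g (FreeGroup.of 0), g (FreeGroup.of 1)))
  rw [hcanon, ← s2] at s1
  have e0 := congrArg Prod.fst s1
  have e1 := congrArg Prod.snd s1
  dsimp only at e0 e1
  set y' := yconj ((g * MulAut.conj x) (FreeGroup.of 0), (g * MulAut.conj x) (FreeGroup.of 1)) with hy'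
  set y := yconj ((g (FreeGroup.of 0), g (FreeGroup.of 1))) with hy
  rw [hval 0] at e0
  rw [hval 1] at e1
  have e0' : (y' * g x) * g (FreeGroup.of 0) * (y' * g x)⁻¹ = y * g (FreeGroup.of 0) * y⁻¹ := by
    rw [show (y' * g x) * g (FreeGroup.of 0) * (y' * g x)⁻¹
        = y' * (g x * g (FreeGroup.of 0) * (g x)⁻¹) * y'⁻¹ from by group]
    exact e0
  have e1' : (y' * g x) * g (FreeGroup.of 1) * (y' * g x)⁻¹ = y * g (FreeGroup.of 1) * y⁻¹ := by
    rw [show (y' * g x) * g (FreeGroup.of 1) * (y' * g x)⁻¹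
        = y' * (g x * g (FreeGroup.of 1) * (g x)⁻¹) * y'⁻¹ from by group]
    exact e1
  have hyz : y' * g x = y := conj_eq_unique e0' e1'
  show MulAut.conj y' * (g * MulAut.conj x) = MulAut.conj y * g
  rw [← hyz, map_mul, mul_assoc, conj_mulaut, ← mul_assoc]

lemma rmap_coset (g : AutF) : g⁻¹ * rmap g ∈ InnFG := by
  refine ⟨g.symm (yconj (g (.of 0), g (.of 1))), ?_⟩
  have := conj_mulaut g (g.symm (yconj (g (.of 0), g (.of 1))))
  rw [MulEquiv.apply_symm_apply] at this
  rw [rmap, this]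
  group

lemma rmap_idem (g : AutF) : rmap (rmap g) = rmap g := rmap_invariant (rmap_coset g)

lemma continuous_rmap : Continuous rmap := by
  apply continuous_induced_rng.2
  apply continuous_pi
  intro w
  show Continuous fun g : AutF => rmap g w
  have : (fun g : AutF => rmap g w) =
      (fun q : FG × FG × FG => yconj (q.1, q.2.1) * q.2.2 * (yconj (q.1, q.2.1))⁻¹) ∘
        (fun g : AutF => (g (.of 0), g (.of 1), g w)) := by
    funext g
    rw [rmap_apply]
    rfl
  rw [this]
  exact continuous_of_discreteTopology.comp
    ((continuous_evalAut _).prodMk ((continuous_evalAut _).prodMk (continuous_evalAut _)))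

def secOut : OutFG → AutF := fun q =>
  Quotient.liftOn' q rmap (fun a b h =>
    (rmap_invariant (QuotientGroup.leftRel_apply.1 h)).symm)

lemma secOut_mk (g : AutF) : secOut (QuotientGroup.mk g) = rmap g := rfl

lemma mk_rmap (g : AutF) : (QuotientGroup.mk (rmap g) : OutFG) = QuotientGroup.mk g := by
  rw [QuotientGroup.eq]
  have := InnFG.inv_mem (rmap_coset g)
  simpa [mul_inv_rev] using this

lemma mk_secOut : ∀ q : OutFG, QuotientGroup.mk (secOut q) = q := by
  intro q
  induction q using QuotientGroup.induction_on with
  | H g => rw [secOut_mk, mk_rmap]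

lemma continuous_secOut : Continuous secOut :=
  continuous_rmap.quotient_liftOn' _

lemma continuous_mkOut : Continuous (QuotientGroup.mk : AutF → OutFG) :=
  continuous_quotient_mk'

lemma isClosedEmbedding_secOut : Topology.IsClosedEmbedding secOut := by
  have hcomp : (QuotientGroup.mk : AutF → OutFG) ∘ secOut = id := funext mk_secOut
  refine ⟨⟨?_, ?_⟩, ?_⟩
  · exact Topology.IsInducing.of_comp continuous_secOut continuous_mkOut
      (by rw [hcomp]; exact Topology.IsInducing.id)
  · intro a b h
    have := congrArg (QuotientGroup.mk : AutF → OutFG) h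
    rwa [mk_secOut, mk_secOut] at this
  · have : Set.range secOut = {g : AutF | rmap g = g} := by
      ext g
      constructor
      · rintro ⟨q, rfl⟩
        induction q using QuotientGroup.induction_on with
        | H a => show rmap (secOut _) = secOut _; rw [secOut_mk]; exact rmap_idem a
      · intro h
        exact ⟨QuotientGroup.mk g, by rw [secOut_mk]; exact h⟩
    rw [this]
    exact isClosed_eq continuous_rmap continuous_id

instance : PolishSpace OutFG := isClosedEmbedding_secOut.polishSpace
instance : IsTopologicalGroup OutFG := inferInstance


/-- `Out(F∞)` with the quotient of the permutation topology is a Polish group. -/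
theorem outFreeGroupInfinite_polishGroup :
    IsTopologicalGroup OutFG ∧ PolishSpace OutFG := by
  exact ⟨inferInstance, inferInstance⟩
end
end
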